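/- arXiv:1801.09324 — 2 statements merged into one kernel-verified Lean document; each statement's English description precedes it below -/
import Mathlib

section
/- Let d ∈ ℕ, N ∈ ℕ₀, k, κ, c, C ∈ (0,∞), (γ_n)_{n∈ℕ₀} ⊆ (0,∞), let g : ℝ^d → ℝ^d be Borel measurable, let (Ω, 𝓕, ℙ, (𝔽_n)_{n∈ℕ₀}) be a filtered probability space, let D : ℕ × Ω → ℝ^d be an (𝔽_n)_{n∈ℕ}-adapted process, let Θ : ℕ₀ × Ω → ℝ^d satisfy that Θ₀ is 𝔽₀-measurable and for all n ∈ ℕ that Θ_n = Θ_{n−1} + γ_n(g(Θ_{n−1}) + D_n), and let V ∈ C¹(ℝ^d, [0,∞)). Assume for all m ∈ ℕ₀, n ∈ ℕ ∩ (N,∞), t ∈ [0,1], θ ∈ ℝ^d that (i) 𝔼[V(Θ_m) + |V′(Θ_{n−1} + γ_n g(Θ_{n−1}))(D_n)|] < ∞, (ii) ∫₀¹ 𝔼[|V′(Θ_{n−1} + γ_n(g(Θ_{n−1}) + sD_n))(D_n)|] ds < ∞, (iii) 𝔼[V′(Θ_{n−1} + γ_n g(Θ_{n−1}))(D_n)]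 = 0 and V(θ + γ_n g(θ)) ≤ (1 − cγ_n)V(θ), (iv) 𝔼[|V′(Θ_{n−1} + γ_n(g(Θ_{n−1}) + tD_n))(D_n) − V′(Θ_{n−1} + γ_n g(Θ_{n−1}))(D_n)|] ≤ κ((γ_n)^k + γ_n 𝔼[V(Θ_{n−1})]), and (v) sup_{l ∈ ℕ ∩ (N,∞)} γ_l ≤ min{c/(2κ), 2/c} and C = inf_{l ∈ ℕ ∩ (N,∞)}[((γ_l)^k − (γ_{l−1})^k)/(γ_l)^{k+1} + c(γ_{l−1})^k/(2(γ_l)^k)]. Then for all n ∈ ℕ₀ it holds that 𝔼[V(Θ_n)] ≤ max({κ/C} ∪ {𝔼[V(Θ_l)]/(γ_l)^k : l ∈ {0,1,...,N}}) · (γ_n)^k < ∞. -/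
/-! Expanding `V` to first order along the noise, the centring assumption kills the linear term
and Tonelli together with (iv) bounds the remainder, which gives the one-step estimate
`𝔼 V(Θₙ) ≤ (1 - c γₙ) 𝔼 V(Θₙ₋₁) + κ γₙ (γₙ^k + γₙ 𝔼 V(Θₙ₋₁))`.
As `κ γₙ ≤ c / 2` this is at most `(1 - c γₙ / 2) 𝔼 V(Θₙ₋₁) + κ γₙ^(k+1)`, and `C` is defined so
that `M γₙ^k` with `M ≥ κ / C` is a supersolution of this recursion; induction from the first
`N + 1` terms concludes. -/

open MeasureTheory Set

section StochasticApproximation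

variable {E : Type*} [NormedAddCommGroup E] [NormedSpace ℝ E] {V : E → ℝ}

theorem sub_eq_integral_fderiv_segment (hV : ContDiff ℝ 1 V) (a v : E) :
    V (a + v) - V a = ∫ s in (0 : ℝ)..1, fderiv ℝ V (a + s • v) v := by
  have hline : ∀ s : ℝ, HasDerivAt (fun s : ℝ => a + s • v) v s := fun s => by
    simpa using ((hasDerivAt_id s).smul_const v).const_add a
  have hderiv : ∀ s ∈ uIcc (0 : ℝ) 1,
      HasDerivAt (fun s : ℝ => V (a + s • v)) (fderiv ℝ V (a + s • v) v) s := fun s _ =>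
    ((hV.differentiable one_ne_zero _).hasFDerivAt).comp_hasDerivAt s (hline s)
  have hcont : Continuous fun s : ℝ => fderiv ℝ V (a + s • v) v := by
    have := hV.continuous_fderiv one_ne_zero
    fun_prop
  rw [intervalIntegral.integral_eq_sub_of_hasDerivAt hderiv (hcont.intervalIntegrable _ _)]
  simp

theorem ofReal_abs_sub_sub_fderiv_le (hV : ContDiff ℝ 1 V) (a h : E) {t : ℝ} (ht : 0 ≤ t) :
    ENNReal.ofReal |V (a + t • h) - V a - t * fderiv ℝ V a h| ≤
      ENNReal.ofReal t * ∫⁻ s in Icc (0 : ℝ) 1,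
        ENNReal.ofReal |fderiv ℝ V (a + s • t • h) h - fderiv ℝ V a h| := by
  have hcont : Continuous fun s : ℝ => fderiv ℝ V (a + s • t • h) h := by
    have := hV.continuous_fderiv one_ne_zero
    fun_prop
  set f : ℝ → ℝ := fun s => fderiv ℝ V (a + s • t • h) h - fderiv ℝ V a h
  have hf : Continuous f := hcont.sub continuous_const
  have hrem : V (a + t • h) - V a - t * fderiv ℝ V a h = t * ∫ s in (0 : ℝ)..1, f s := by
    rw [sub_eq_integral_fderiv_segment hV, intervalIntegral.integral_sub
      (hcont.intervalIntegrable 0 1) intervalIntegrable_const]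
    simp only [map_smul, smul_eq_mul, intervalIntegral.integral_const_mul,
      intervalIntegral.integral_const, sub_zero, one_mul]
    ring
  calc ENNReal.ofReal |V (a + t • h) - V a - t * fderiv ℝ V a h|
      ≤ ENNReal.ofReal (t * ∫ s in (0 : ℝ)..1, |f s|) := by
        rw [hrem, abs_mul, abs_of_nonneg ht]
        gcongr
        exact intervalIntegral.abs_integral_le_integral_abs zero_le_one
    _ = ENNReal.ofReal t * ∫⁻ s in Ioc (0 : ℝ) 1, ENNReal.ofReal |f s| := by
        rw [ENNReal.ofReal_mul ht, intervalIntegral.integral_of_le zero_le_one,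
          ofReal_integral_eq_lintegral_ofReal hf.abs.integrableOn_Ioc
            (ae_of_all _ fun s => abs_nonneg _)]
    _ ≤ _ := by gcongr; exact Ioc_subset_Icc_self

variable [MeasurableSpace E] [BorelSpace E] [SecondCountableTopology E]
  {Ω : Type*} [MeasurableSpace Ω] {μ : Measure Ω} [SFinite μ]

theorem integral_comp_add_smul_le (hV : ContDiff ℝ 1 V) {A H : Ω → E}
    (hA : Measurable A) (hH : Measurable H) {t ε : ℝ} (ht : 0 ≤ t) (hε : 0 ≤ ε)
    (hVA : Integrable (fun ω => V (A ω)) μ) (hVAH : Integrable (fun ω => V (A ω + t • H ω)) μ)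
    (hdrift_int : Integrable (fun ω => fderiv ℝ V (A ω) (H ω)) μ)
    (hdrift : ∫ ω, fderiv ℝ V (A ω) (H ω) ∂μ = 0)
    (hrem : ∀ s ∈ Icc (0 : ℝ) 1, ∫⁻ ω, ENNReal.ofReal
      |fderiv ℝ V (A ω + s • t • H ω) (H ω) - fderiv ℝ V (A ω) (H ω)| ∂μ ≤ ENNReal.ofReal ε) :
    ∫ ω, V (A ω + t • H ω) ∂μ ≤ ∫ ω, V (A ω) ∂μ + t * ε := by
  set R : Ω → ℝ := fun ω => V (A ω + t • H ω) - V (A ω) - t * fderiv ℝ V (A ω) (H ω)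
  have hR : Integrable R μ := (hVAH.sub hVA).sub (hdrift_int.const_mul t)
  have hmeas : Measurable (Function.uncurry fun ω (s : ℝ) => ENNReal.ofReal
      |fderiv ℝ V (A ω + s • t • H ω) (H ω) - fderiv ℝ V (A ω) (H ω)|) := by
    have := hV.continuous_fderiv one_ne_zero
    have hφ : Continuous fun p : (E × E) × ℝ =>
        |fderiv ℝ V (p.1.1 + p.2 • t • p.1.2) p.1.2 - fderiv ℝ V p.1.1 p.1.2| := by fun_prop
    exact (hφ.measurable.comp
      (((hA.prodMk hH).comp measurable_fst).prodMk measurable_snd)).ennreal_ofReal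
  have hRabs : ENNReal.ofReal (∫ ω, |R ω| ∂μ) ≤ ENNReal.ofReal (t * ε) := by
    rw [ofReal_integral_eq_lintegral_ofReal hR.abs (ae_of_all _ fun ω => abs_nonneg _)]
    calc ∫⁻ ω, ENNReal.ofReal |R ω| ∂μ
        ≤ ∫⁻ ω, ENNReal.ofReal t * (∫⁻ s in Icc (0 : ℝ) 1, ENNReal.ofReal
            |fderiv ℝ V (A ω + s • t • H ω) (H ω) - fderiv ℝ V (A ω) (H ω)|) ∂μ :=
          lintegral_mono fun ω => ofReal_abs_sub_sub_fderiv_le hV (A ω) (H ω) ht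
      _ = ENNReal.ofReal t * ∫⁻ s in Icc (0 : ℝ) 1, ∫⁻ ω, ENNReal.ofReal
            |fderiv ℝ V (A ω + s • t • H ω) (H ω) - fderiv ℝ V (A ω) (H ω)| ∂μ := by
          rw [lintegral_const_mul' _ _ ENNReal.ofReal_ne_top,
            lintegral_lintegral_swap hmeas.aemeasurable]
      _ ≤ ENNReal.ofReal t * ∫⁻ _ in Icc (0 : ℝ) 1, ENNReal.ofReal ε := by
          gcongr 1
          exact setLIntegral_mono measurable_const hrem
      _ = ENNReal.ofReal (t * ε) := by
          rw [setLIntegral_const, Real.volume_Icc, sub_zero, ENNReal.ofReal_one, mul_one,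
            ENNReal.ofReal_mul ht]
  have hRle : ∫ ω, R ω ∂μ ≤ t * ε :=
    (integral_mono hR hR.abs fun ω => le_abs_self _).trans
      ((ENNReal.ofReal_le_ofReal_iff (by positivity)).mp hRabs)
  have hsplit : ∫ ω, V (A ω + t • H ω) ∂μ =
      ∫ ω, V (A ω) ∂μ + t * ∫ ω, fderiv ℝ V (A ω) (H ω) ∂μ + ∫ ω, R ω ∂μ := by
    have hpt : ∀ ω, V (A ω + t • H ω) = V (A ω) + t * fderiv ℝ V (A ω) (H ω) + R ω := fun ω => by
      simp only [R]
      ring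
    have hint : Integrable (fun ω => V (A ω) + t * fderiv ℝ V (A ω) (H ω)) μ :=
      hVA.add (hdrift_int.const_mul t)
    rw [integral_congr_ae (ae_of_all _ hpt), integral_add hint hR,
      integral_add hVA (hdrift_int.const_mul t), integral_const_mul]
  rw [hsplit, hdrift, mul_zero, add_zero]
  gcongr

theorem integral_lyapunov_step_le (hV : ContDiff ℝ 1 V) (hV_nonneg : ∀ x, 0 ≤ V x)
    {G : E → E} (hG : Measurable G) {θ H : Ω → E} (hθ : Measurable θ) (hH : Measurable H)
    {γ c ε : ℝ} (hγ : 0 ≤ γ) (hε : 0 ≤ ε) (hVθ : Integrable (fun ω => V (θ ω)) μ)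
    (hVnext : Integrable (fun ω => V (θ ω + γ • (G (θ ω) + H ω))) μ)
    (hdrift_int : Integrable (fun ω => fderiv ℝ V (θ ω + γ • G (θ ω)) (H ω)) μ)
    (hdrift : ∫ ω, fderiv ℝ V (θ ω + γ • G (θ ω)) (H ω) ∂μ = 0)
    (hcontr : ∀ x, V (x + γ • G x) ≤ (1 - c * γ) * V x)
    (hrem : ∀ s ∈ Icc (0 : ℝ) 1, ∫⁻ ω, ENNReal.ofReal
      |fderiv ℝ V (θ ω + γ • (G (θ ω) + s • H ω)) (H ω)
        - fderiv ℝ V (θ ω + γ • G (θ ω)) (H ω)| ∂μ ≤ ENNReal.ofReal ε) :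
    ∫ ω, V (θ ω + γ • (G (θ ω) + H ω)) ∂μ ≤ (1 - c * γ) * ∫ ω, V (θ ω) ∂μ + γ * ε := by
  set A : Ω → E := fun ω => θ ω + γ • G (θ ω)
  have hA : Measurable A := hθ.add ((hG.comp hθ).const_smul γ)
  have hshift : ∀ (s : ℝ) ω, θ ω + γ • (G (θ ω) + s • H ω) = A ω + s • γ • H ω := fun s ω => by
    simp only [A]
    module
  have hstep : ∀ ω, θ ω + γ • (G (θ ω) + H ω) = A ω + γ • H ω := fun ω => by
    simp only [A]
    module
  have hVA : Integrable (fun ω => V (A ω)) μ := by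
    refine (hVθ.const_mul (1 - c * γ)).mono (hV.continuous.measurable.comp hA).aestronglyMeasurable
      (ae_of_all _ fun ω => ?_)
    rw [Real.norm_of_nonneg (hV_nonneg _)]
    exact (hcontr (θ ω)).trans (le_abs_self _)
  have hVA_le : ∫ ω, V (A ω) ∂μ ≤ (1 - c * γ) * ∫ ω, V (θ ω) ∂μ := by
    rw [← integral_const_mul]
    exact integral_mono hVA (hVθ.const_mul _) fun ω => hcontr (θ ω)
  have hnext := integral_comp_add_smul_le hV hA hH hγ hε hVA
    (by simpa only [hstep] using hVnext) hdrift_int hdrift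
    (fun s hs => by simpa only [hshift] using hrem s hs)
  simp only [← hstep] at hnext
  linarith

theorem measurable_of_eq_add_smul {G : E → E} (hG : Measurable G) {γ : ℕ → ℝ}
    {Θ D : ℕ → Ω → E} (h0 : Measurable (Θ 0)) (hD : ∀ n, 1 ≤ n → Measurable (D n))
    (hΘ : ∀ n, 1 ≤ n → ∀ ω, Θ n ω = Θ (n - 1) ω + γ n • (G (Θ (n - 1) ω) + D n ω)) :
    ∀ n, Measurable (Θ n)
  | 0 => h0
  | n + 1 => by
    have ih := measurable_of_eq_add_smul hG h0 hD hΘ n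
    have he : Θ (n + 1) = fun ω => Θ n ω + γ (n + 1) • (G (Θ n ω) + D (n + 1) ω) :=
      funext (hΘ (n + 1) n.succ_pos)
    rw [he]
    exact ih.add (((hG.comp ih).add (hD _ n.succ_pos)).const_smul _)

end StochasticApproximation

theorem Real.sInf_le_of_sInf_pos {s : Set ℝ} {x : ℝ} (hs : 0 < sInf s) (hx : x ∈ s) :
    sInf s ≤ x := by
  refine csInf_le ?_ hx
  by_contra hbdd
  rw [Real.sInf_of_not_bddBelow hbdd] at hs
  exact hs.false

theorem le_mul_rpow_of_step {k κ c M γ₀ γ₁ x y : ℝ} (hγ₁ : 0 < γ₁) (hx : 0 ≤ x)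
    (hxM : x ≤ M * γ₀ ^ k) (hκγ : κ * γ₁ ≤ c / 2) (hcγ : c * γ₁ ≤ 2)
    (hκM : κ * (γ₁ * γ₁ ^ k) ≤ M * (γ₁ ^ k - γ₀ ^ k + c * γ₁ * γ₀ ^ k / 2))
    (hy : y ≤ (1 - c * γ₁) * x + γ₁ * (κ * (γ₁ ^ k + γ₁ * x))) :
    y ≤ M * γ₁ ^ k := by
  have hcoef : 1 - c * γ₁ + κ * γ₁ ^ 2 ≤ 1 - c * γ₁ / 2 := by
    nlinarith [mul_le_mul_of_nonneg_right hκγ hγ₁.le]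
  have hx' : (1 - c * γ₁ + κ * γ₁ ^ 2) * x ≤ (1 - c * γ₁ / 2) * (M * γ₀ ^ k) :=
    (mul_le_mul_of_nonneg_right hcoef hx).trans
      (mul_le_mul_of_nonneg_left hxM (by linarith))
  calc y ≤ (1 - c * γ₁ + κ * γ₁ ^ 2) * x + κ * (γ₁ * γ₁ ^ k) := by linarith
    _ ≤ (1 - c * γ₁ / 2) * (M * γ₀ ^ k) + M * (γ₁ ^ k - γ₀ ^ k + c * γ₁ * γ₀ ^ k / 2) :=
      add_le_add hx' hκM
    _ = M * γ₁ ^ k := by ring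

theorem le_mul_rpow_of_recursion {N : ℕ} {k κ c C M : ℝ} {γ x : ℕ → ℝ} (hγ : ∀ n, 0 < γ n)
    (hκ : 0 < κ) (hc : 0 < c) (hC : 0 < C) (hx : ∀ n, 0 ≤ x n)
    (hγ_le : ∀ l, N < l → γ l ≤ min (c / (2 * κ)) (2 / c))
    (hC_le : ∀ l, N < l →
      C ≤ (γ l ^ k - γ (l - 1) ^ k) / γ l ^ (k + 1) + c * γ (l - 1) ^ k / (2 * γ l ^ k))
    (hM : κ / C ≤ M) (hbase : ∀ n ≤ N, x n ≤ M * γ n ^ k)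
    (hrec : ∀ n, N < n + 1 → x (n + 1) ≤
      (1 - c * γ (n + 1)) * x n + γ (n + 1) * (κ * (γ (n + 1) ^ k + γ (n + 1) * x n))) :
    ∀ n, x n ≤ M * γ n ^ k
  | 0 => hbase 0 N.zero_le
  | m + 1 => by
    rcases le_or_gt (m + 1) N with hmN | hmN
    · exact hbase _ hmN
    have hγ₁ := hγ (m + 1)
    have hκγ : κ * γ (m + 1) ≤ c / 2 := by
      have := (le_div_iff₀ (by positivity)).mp ((hγ_le _ hmN).trans (min_le_left _ _))
      linarith
    have hcγ : c * γ (m + 1) ≤ 2 := by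
      have := (le_div_iff₀ hc).mp ((hγ_le _ hmN).trans (min_le_right _ _))
      linarith
    have hκC : κ ≤ M * C := (div_le_iff₀ hC).mp hM
    have hM0 : 0 ≤ M := (div_pos hκ hC).le.trans hM
    have hbracket : ((γ (m + 1) ^ k - γ m ^ k) / γ (m + 1) ^ (k + 1)
        + c * γ m ^ k / (2 * γ (m + 1) ^ k)) * (γ (m + 1) * γ (m + 1) ^ k)
        = γ (m + 1) ^ k - γ m ^ k + c * γ (m + 1) * γ m ^ k / 2 := by
      have := Real.rpow_pos_of_pos hγ₁ k
      rw [Real.rpow_add_one hγ₁.ne']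
      field_simp
    have hκM : κ * (γ (m + 1) * γ (m + 1) ^ k)
        ≤ M * (γ (m + 1) ^ k - γ m ^ k + c * γ (m + 1) * γ m ^ k / 2) := by
      have hCm := hC_le (m + 1) hmN
      rw [Nat.add_sub_cancel] at hCm
      rw [← hbracket, ← mul_assoc M]
      exact mul_le_mul_of_nonneg_right (hκC.trans (mul_le_mul_of_nonneg_left hCm hM0))
        (mul_pos hγ₁ (Real.rpow_pos_of_pos hγ₁ k)).le
    exact le_mul_rpow_of_step hγ₁ (hx m)
      (le_mul_rpow_of_recursion hγ hκ hc hC hx hγ_le hC_le hM hbase hrec m) hκγ hcγ hκM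
      (hrec m hmN)

theorem stmt_5_general (d : ℕ)
    (N : ℕ) (k κ c C : ℝ) (hκ : 0 < κ) (hc : 0 < c) (hC : 0 < C)
    (γ : ℕ → ℝ) (hγ : ∀ n : ℕ, 0 < γ n)
    (g : EuclideanSpace ℝ (Fin d) → EuclideanSpace ℝ (Fin d)) (hg : Measurable g)
    {Ω : Type*} [m0 : MeasurableSpace Ω] (P : Measure Ω) [IsProbabilityMeasure P]
    (ℱ : Filtration ℕ m0)
    (D : ℕ → Ω → EuclideanSpace ℝ (Fin d))
    (hD_adapted : ∀ n : ℕ, 1 ≤ n → Measurable[ℱ n] (D n))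
    (Θ : ℕ → Ω → EuclideanSpace ℝ (Fin d)) (hΘ0_meas : Measurable[ℱ 0] (Θ 0))
    (hΘ : ∀ n : ℕ, 1 ≤ n → ∀ ω : Ω,
      Θ n ω = Θ (n - 1) ω + γ n • (g (Θ (n - 1) ω) + D n ω))
    (V : EuclideanSpace ℝ (Fin d) → ℝ) (hV_C1 : ContDiff ℝ 1 V) (hV_nonneg : ∀ θ, 0 ≤ V θ)
    (h1 : ∀ m : ℕ, Integrable (fun ω => V (Θ m ω)) P)
    (h1' : ∀ n : ℕ, N < n →
      Integrable (fun ω => fderiv ℝ V (Θ (n - 1) ω + γ n • g (Θ (n - 1) ω)) (D n ω)) P)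
    (h3 : ∀ n : ℕ, N < n →
      ∫ ω, fderiv ℝ V (Θ (n - 1) ω + γ n • g (Θ (n - 1) ω)) (D n ω) ∂P = 0)
    (h3' : ∀ n : ℕ, N < n → ∀ θ : EuclideanSpace ℝ (Fin d),
      V (θ + γ n • g θ) ≤ (1 - c * γ n) * V θ)
    (h4 : ∀ n : ℕ, N < n → ∀ t ∈ Set.Icc (0 : ℝ) 1,
      ∫⁻ ω, ENNReal.ofReal
          |fderiv ℝ V (Θ (n - 1) ω + γ n • (g (Θ (n - 1) ω) + t • D n ω)) (D n ω)
            - fderiv ℝ V (Θ (n - 1) ω + γ n • g (Θ (n - 1) ω)) (D n ω)| ∂P ≤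
        ENNReal.ofReal (κ * (γ n ^ k + γ n * ∫ ω, V (Θ (n - 1) ω) ∂P)))
    (h5 : ∀ l : ℕ, N < l → γ l ≤ min (c / (2 * κ)) (2 / c))
    (hCdef : C = sInf {x : ℝ | ∃ l : ℕ, N < l ∧
      x = (γ l ^ k - γ (l - 1) ^ k) / γ l ^ (k + 1) + c * γ (l - 1) ^ k / (2 * γ l ^ k)}) :
    ∀ n : ℕ, ∫ ω, V (Θ n ω) ∂P ≤
      max (κ / C) (⨆ l : Fin (N + 1), (∫ ω, V (Θ l ω) ∂P) / γ l ^ k) * γ n ^ k := by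
  have hD_meas (n : ℕ) (hn : 1 ≤ n) : Measurable (D n) := (hD_adapted n hn).mono (ℱ.le n) le_rfl
  have hΘ_meas := measurable_of_eq_add_smul hg (hΘ0_meas.mono (ℱ.le 0) le_rfl) hD_meas hΘ
  have hEV_nonneg (n : ℕ) : 0 ≤ ∫ ω, V (Θ n ω) ∂P := integral_nonneg fun ω => hV_nonneg _
  refine le_mul_rpow_of_recursion hγ hκ hc hC hEV_nonneg h5
    (fun l hl => hCdef ▸ Real.sInf_le_of_sInf_pos (hCdef ▸ hC) ⟨l, hl, rfl⟩)
    (le_max_left _ _) (fun n hn => ?_) (fun n hn => ?_)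
  · rw [← div_le_iff₀ (Real.rpow_pos_of_pos (hγ n) k)]
    exact (le_ciSup (f := fun l : Fin (N + 1) => (∫ ω, V (Θ l ω) ∂P) / γ l ^ k)
      (Set.finite_range _).bddAbove ⟨n, Nat.lt_succ_of_le hn⟩).trans (le_max_right _ _)
  · have hΘ_succ : (fun ω => V (Θ (n + 1) ω)) =
        fun ω => V (Θ n ω + γ (n + 1) • (g (Θ n ω) + D (n + 1) ω)) :=
      funext fun ω => by rw [hΘ (n + 1) n.succ_pos ω, Nat.add_sub_cancel]
    have h1'n := h1' _ hn
    have h3n := h3 _ hn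
    have h4n := h4 _ hn
    simp only [Nat.add_sub_cancel] at h1'n h3n h4n
    rw [hΘ_succ]
    exact integral_lyapunov_step_le hV_C1 hV_nonneg hg (hΘ_meas n) (hD_meas _ n.succ_pos)
      (hγ _).le (mul_nonneg hκ.le (add_nonneg (Real.rpow_nonneg (hγ _).le k)
        (mul_nonneg (hγ _).le (hEV_nonneg n)))) (h1 n) (hΘ_succ ▸ h1 (n + 1))
      h1'n h3n (h3' _ hn) h4n

/-- **Lyapunov-based convergence for stochastic approximation** (Proposition 3.2). -/
theorem stmt_5 (d : ℕ) (hd : 0 < d)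
    (N : ℕ) (k κ c C : ℝ) (hk : 0 < k) (hκ : 0 < κ) (hc : 0 < c) (hC : 0 < C)
    (γ : ℕ → ℝ) (hγ : ∀ n : ℕ, 0 < γ n)
    (g : EuclideanSpace ℝ (Fin d) → EuclideanSpace ℝ (Fin d)) (hg : Measurable g)
    {Ω : Type*} [m0 : MeasurableSpace Ω] (P : Measure Ω) [IsProbabilityMeasure P]
    (ℱ : Filtration ℕ m0)
    (D : ℕ → Ω → EuclideanSpace ℝ (Fin d))
    (hD_adapted : ∀ n : ℕ, 1 ≤ n → Measurable[ℱ n] (D n))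
    (Θ : ℕ → Ω → EuclideanSpace ℝ (Fin d)) (hΘ0_meas : Measurable[ℱ 0] (Θ 0))
    (hΘ : ∀ n : ℕ, 1 ≤ n → ∀ ω : Ω,
      Θ n ω = Θ (n - 1) ω + γ n • (g (Θ (n - 1) ω) + D n ω))
    (V : EuclideanSpace ℝ (Fin d) → ℝ) (hV_C1 : ContDiff ℝ 1 V) (hV_nonneg : ∀ θ, 0 ≤ V θ)
    (h1 : ∀ m : ℕ, Integrable (fun ω => V (Θ m ω)) P)
    (h1' : ∀ n : ℕ, N < n →
      Integrable (fun ω => fderiv ℝ V (Θ (n - 1) ω + γ n • g (Θ (n - 1) ω)) (D n ω)) P)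
    (h2 : ∀ n : ℕ, N < n →
      (∫⁻ s in Set.Icc (0 : ℝ) 1, ∫⁻ ω, ENNReal.ofReal
        |fderiv ℝ V (Θ (n - 1) ω + γ n • (g (Θ (n - 1) ω) + s • D n ω)) (D n ω)| ∂P) < ⊤)
    (h3 : ∀ n : ℕ, N < n →
      ∫ ω, fderiv ℝ V (Θ (n - 1) ω + γ n • g (Θ (n - 1) ω)) (D n ω) ∂P = 0)
    (h3' : ∀ n : ℕ, N < n → ∀ θ : EuclideanSpace ℝ (Fin d),
      V (θ + γ n • g θ) ≤ (1 - c * γ n) * V θ)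
    (h4 : ∀ n : ℕ, N < n → ∀ t ∈ Set.Icc (0 : ℝ) 1,
      ∫⁻ ω, ENNReal.ofReal
          |fderiv ℝ V (Θ (n - 1) ω + γ n • (g (Θ (n - 1) ω) + t • D n ω)) (D n ω)
            - fderiv ℝ V (Θ (n - 1) ω + γ n • g (Θ (n - 1) ω)) (D n ω)| ∂P ≤
        ENNReal.ofReal (κ * (γ n ^ k + γ n * ∫ ω, V (Θ (n - 1) ω) ∂P)))
    (h5 : ∀ l : ℕ, N < l → γ l ≤ min (c / (2 * κ)) (2 / c))
    (hCdef : C = sInf {x : ℝ | ∃ l : ℕ, N < l ∧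
      x = (γ l ^ k - γ (l - 1) ^ k) / γ l ^ (k + 1) + c * γ (l - 1) ^ k / (2 * γ l ^ k)}) :
    ∀ n : ℕ, ∫ ω, V (Θ n ω) ∂P ≤
      max (κ / C) (⨆ l : Fin (N + 1), (∫ ω, V (Θ l ω) ∂P) / γ l ^ k) * γ n ^ k :=
  stmt_5_general d N k κ c C hκ hc hC γ hγ g hg (m0 := m0) P ℱ D hD_adapted Θ hΘ0_meas hΘ V hV_C1
    hV_nonneg h1 h1' h3 h3' h4 h5 hCdef
end

section
/- Let d ∈ ℕ, ϑ ∈ ℝ^d, c₁, c₂ ∈ (0,∞), let ⟨·,·⟩ be a scalar product on ℝ^d with induced norm ‖·‖, and let g : ℝ^d → ℝ^d satisfy for all θ ∈ ℝ^d that ⟨θ − ϑ, g(θ)⟩ ≤ −max{c₁‖θ−ϑ‖², c₂‖g(θ)‖²}. Then (i) {θ ∈ ℝ^d : g(θ) = 0} = {ϑ}, (ii) c₁c₂ ≤ 1, (iii) for all θ ∈ ℝ^d it holds that c₁‖θ−ϑ‖ ≤ ‖g(θ)‖ ≤ (1/c₂)‖θ−ϑ‖, (iv) for all θ ∈ ℝ^d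 and r ∈ [0, 2c₂] it holds that ‖θ + r g(θ) − ϑ‖² ≤ (1 − c₁r(2 − r/c₂))‖θ−ϑ‖², and (v) for all θ ∈ ℝ^d and r ∈ [0, c₂] it holds that ‖θ + r g(θ) − ϑ‖² ≤ (1 − c₁r)‖θ−ϑ‖². -/
open scoped RealInnerProductSpace

/-!
Write `x = θ - ϑ` and `v = g θ`. By Cauchy–Schwarz, `c₁ * ‖x‖ ^ 2 ≤ -⟪x, v⟫ ≤ ‖x‖ * ‖v‖` gives
`c₁ * ‖x‖ ≤ ‖v‖`, and the same with the roles of `x` and `v` swapped gives `c₂ * ‖v‖ ≤ ‖x‖`;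
the zero set and `c₁ * c₂ ≤ 1` follow. For the step `x + r • v`, expand the square and absorb
`r ^ 2 * ‖v‖ ^ 2` into the cross term via `c₂ * ‖v‖ ^ 2 ≤ -⟪x, v⟫`; the remaining multiple of
`⟪x, v⟫` is then bounded by `-c₁ * ‖x‖ ^ 2`.
-/

section InnerBounds

variable {E : Type*} [NormedAddCommGroup E] [InnerProductSpace ℝ E]

theorem mul_norm_le_norm_of_inner_le_neg_mul_sq {x v : E} {c : ℝ}
    (h : ⟪x, v⟫ ≤ -(c * ‖x‖ ^ 2)) : c * ‖x‖ ≤ ‖v‖ := by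
  rcases (norm_nonneg x).eq_or_lt with hx | hx
  · rw [← hx, mul_zero]
    exact norm_nonneg v
  · have hcs : -(‖x‖ * ‖v‖) ≤ ⟪x, v⟫ := neg_le_of_abs_le (abs_real_inner_le_norm x v)
    refine le_of_mul_le_mul_right ?_ hx
    nlinarith

theorem norm_add_smul_sq_real (x v : E) (r : ℝ) :
    ‖x + r • v‖ ^ 2 = ‖x‖ ^ 2 + 2 * r * ⟪x, v⟫ + r ^ 2 * ‖v‖ ^ 2 := by
  rw [norm_add_sq_real, real_inner_smul_right, norm_smul, Real.norm_eq_abs, mul_pow, sq_abs,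
    mul_assoc]

variable {x v : E} {c₁ c₂ r : ℝ}

theorem norm_add_smul_sq_le_of_inner_le (h₁ : ⟪x, v⟫ ≤ -(c₁ * ‖x‖ ^ 2))
    (h₂ : ⟪x, v⟫ ≤ -(c₂ * ‖v‖ ^ 2)) (hc₂ : 0 < c₂) (hr : r ∈ Set.Icc 0 (2 * c₂)) :
    ‖x + r • v‖ ^ 2 ≤ (1 - c₁ * r * (2 - r / c₂)) * ‖x‖ ^ 2 := by
  obtain ⟨hr₀, hr₂⟩ := hr
  have hcoef : 0 ≤ 2 * r - r ^ 2 / c₂ := by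
    rw [sub_nonneg, div_le_iff₀ hc₂]
    nlinarith
  have hv : r ^ 2 * ‖v‖ ^ 2 ≤ r ^ 2 / c₂ * -⟪x, v⟫ := by
    calc r ^ 2 * ‖v‖ ^ 2 = r ^ 2 / c₂ * (c₂ * ‖v‖ ^ 2) := by field_simp
      _ ≤ r ^ 2 / c₂ * -⟪x, v⟫ := by gcongr; linarith
  have hx : (2 * r - r ^ 2 / c₂) * ⟪x, v⟫ ≤ (2 * r - r ^ 2 / c₂) * -(c₁ * ‖x‖ ^ 2) :=
    mul_le_mul_of_nonneg_left h₁ hcoef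
  rw [norm_add_smul_sq_real]
  linear_combination hv + hx

theorem norm_add_smul_sq_le_of_inner_le_of_le (h₁ : ⟪x, v⟫ ≤ -(c₁ * ‖x‖ ^ 2))
    (h₂ : ⟪x, v⟫ ≤ -(c₂ * ‖v‖ ^ 2)) (hr : r ∈ Set.Icc 0 c₂) :
    ‖x + r • v‖ ^ 2 ≤ (1 - c₁ * r) * ‖x‖ ^ 2 := by
  obtain ⟨hr₀, hrc⟩ := hr
  have hv : r ^ 2 * ‖v‖ ^ 2 ≤ r * c₂ * ‖v‖ ^ 2 := by
    gcongr
    nlinarith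
  have hxv : r * ⟪x, v⟫ ≤ r * -(c₂ * ‖v‖ ^ 2) := mul_le_mul_of_nonneg_left h₂ hr₀
  have hx : r * ⟪x, v⟫ ≤ r * -(c₁ * ‖x‖ ^ 2) := mul_le_mul_of_nonneg_left h₁ hr₀
  rw [norm_add_smul_sq_real]
  linear_combination hv + hxv + hx

end InnerBounds

theorem stmt_10_general {E : Type*} [NormedAddCommGroup E] [InnerProductSpace ℝ E]
    (d : ℕ) (hd : 0 < d) (hdim : Module.finrank ℝ E = d)
    (ϑ : E) (c₁ c₂ : ℝ) (hc₁ : 0 < c₁) (hc₂ : 0 < c₂) (g : E → E)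
    (hg : ∀ θ : E, ⟪θ - ϑ, g θ⟫ ≤ -max (c₁ * ‖θ - ϑ‖ ^ 2) (c₂ * ‖g θ‖ ^ 2)) :
    {θ : E | g θ = 0} = {ϑ} ∧
    c₁ * c₂ ≤ 1 ∧
    (∀ θ : E, c₁ * ‖θ - ϑ‖ ≤ ‖g θ‖ ∧ ‖g θ‖ ≤ (1 / c₂) * ‖θ - ϑ‖) ∧
    (∀ θ : E, ∀ r ∈ Set.Icc (0 : ℝ) (2 * c₂),
      ‖θ + r • g θ - ϑ‖ ^ 2 ≤ (1 - c₁ * r * (2 - r / c₂)) * ‖θ - ϑ‖ ^ 2) ∧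
    (∀ θ : E, ∀ r ∈ Set.Icc (0 : ℝ) c₂,
      ‖θ + r • g θ - ϑ‖ ^ 2 ≤ (1 - c₁ * r) * ‖θ - ϑ‖ ^ 2) := by
  have h₁ θ : ⟪θ - ϑ, g θ⟫ ≤ -(c₁ * ‖θ - ϑ‖ ^ 2) := (hg θ).trans (neg_le_neg (le_max_left _ _))
  have h₂ θ : ⟪θ - ϑ, g θ⟫ ≤ -(c₂ * ‖g θ‖ ^ 2) := (hg θ).trans (neg_le_neg (le_max_right _ _))
  have hbounds θ : c₁ * ‖θ - ϑ‖ ≤ ‖g θ‖ ∧ ‖g θ‖ ≤ (1 / c₂) * ‖θ - ϑ‖ := by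
    refine ⟨mul_norm_le_norm_of_inner_le_neg_mul_sq (h₁ θ), ?_⟩
    rw [one_div_mul_eq_div, le_div_iff₀' hc₂]
    exact mul_norm_le_norm_of_inner_le_neg_mul_sq (real_inner_comm (g θ) _ ▸ h₂ θ)
  have hzero : {θ : E | g θ = 0} = {ϑ} := by
    ext θ
    simp only [Set.mem_ofPred_eq, Set.mem_singleton_iff]
    constructor
    · intro hθ
      have := (hbounds θ).1
      rw [hθ, norm_zero] at this
      exact sub_eq_zero.mp (norm_le_zero_iff.mp (nonpos_of_mul_nonpos_right this hc₁))
    · intro hθ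
      simpa [hθ] using (hbounds θ).2
  have hprod : c₁ * c₂ ≤ 1 := by
    have : Nontrivial E := Module.nontrivial_of_finrank_pos (hdim ▸ hd)
    obtain ⟨θ, hθ⟩ := exists_ne ϑ
    have hpos : 0 < ‖θ - ϑ‖ := norm_pos_iff.mpr (sub_ne_zero.mpr hθ)
    have := le_of_mul_le_mul_right ((hbounds θ).1.trans (hbounds θ).2) hpos
    rwa [le_div_iff₀ hc₂] at this
  refine ⟨hzero, hprod, hbounds, fun θ r hr => ?_, fun θ r hr => ?_⟩
  · rw [add_sub_right_comm]
    exact norm_add_smul_sq_le_of_inner_le (h₁ θ) (h₂ θ) hc₂ hr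
  · rw [add_sub_right_comm]
    exact norm_add_smul_sq_le_of_inner_le_of_le (h₁ θ) (h₂ θ) hr

/-- **Properties of coercivity-type conditions** (Lemma 2.8, `fcond`). -/
theorem stmt_10 {E : Type*} [NormedAddCommGroup E] [InnerProductSpace ℝ E]
    [FiniteDimensional ℝ E] (d : ℕ) (hd : 0 < d) (hdim : Module.finrank ℝ E = d)
    (ϑ : E) (c₁ c₂ : ℝ) (hc₁ : 0 < c₁) (hc₂ : 0 < c₂) (g : E → E)
    (hg : ∀ θ : E, ⟪θ - ϑ, g θ⟫ ≤ -max (c₁ * ‖θ - ϑ‖ ^ 2) (c₂ * ‖g θ‖ ^ 2)) :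
    {θ : E | g θ = 0} = {ϑ} ∧
    c₁ * c₂ ≤ 1 ∧
    (∀ θ : E, c₁ * ‖θ - ϑ‖ ≤ ‖g θ‖ ∧ ‖g θ‖ ≤ (1 / c₂) * ‖θ - ϑ‖) ∧
    (∀ θ : E, ∀ r ∈ Set.Icc (0 : ℝ) (2 * c₂),
      ‖θ + r • g θ - ϑ‖ ^ 2 ≤ (1 - c₁ * r * (2 - r / c₂)) * ‖θ - ϑ‖ ^ 2) ∧
    (∀ θ : E, ∀ r ∈ Set.Icc (0 : ℝ) c₂,
      ‖θ + r • g θ - ϑ‖ ^ 2 ≤ (1 - c₁ * r) * ‖θ - ϑ‖ ^ 2) :=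
  stmt_10_general d hd hdim ϑ c₁ c₂ hc₁ hc₂ g hg
end
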